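/- arXiv:math/0001163 — 2 statements merged into one kernel-verified Lean document; each statement's English description precedes it below -/
import Mathlib

section
/- Let G be an N×N matrix and R ⊆ {1,...,N}. Let G_RR be the principal submatrix of G obtained by deleting the rows and columns indexed by R. Then det G_RR = (-1)^{N-|R|} Σ_{F ∈ F_{ {†}∪R }} π_F, where F_{ {†}∪R } is the set of spanning forests of the augmented digraph G† whose set of roots is exactly {†} ∪ R. -/
/-!
Let `w` be the arc weights of `G†` and `L = diag(∑ₜ w u t) - w` its out-degree Laplacian; on the
vertices `i ∈ Fin N` it equals `-G`, so `det G_RR` is `(-1)^(N-|R|)` times the principal minor of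
`L` on the complement of `S = {†} ∪ R`. Row `u` of that minor is `∑ₜ w u t • (eᵤ - eₜ)`, so by
multilinearity the minor is `∑_g (∏ᵤ w u (g u)) · det (1 - A_g)`, summed over all choices `g` of an
out-neighbour for each vertex outside `S`, where `A_g` is the adjacency matrix of `g` off `S`.
If `g` (with `S` as roots) is a forest, only the identity permutation contributes to
`det (1 - A_g)`, since any other one would trace a circuit of `g`; so it is `1`. Otherwise the
indicator of the vertices whose path never reaches a root is a null vector of `1 - A_g`, so it
is `0`.
-/

open scoped Classical
open Finset

noncomputable section

/-- The step relation of an out-neighbor map: there is an arc from `a` to `b`. -/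
def FStep {V : Type*} (f : V → Option V) (a b : V) : Prop := f a = some b

/-- A forest: a digraph in which every vertex has out-degree ≤ 1 (encoded by the
out-neighbor map `f`) and which has no directed circuits. -/
def IsForest {V : Type*} (f : V → Option V) : Prop :=
  ∀ v, ¬ Relation.TransGen (FStep f) v v

/-- The roots of a forest: vertices of out-degree 0.  For a forest, the number of
trees (connected components) equals the number of roots. -/
def roots {V : Type*} [Fintype V] (f : V → Option V) : Finset V :=
  Finset.univ.filter (fun v => f v = none)

/-- `Reach f a b`: the directed path out of `a` (following arcs) passes through `b`. -/
def Reach {V : Type*} (f : V → Option V) (a b : V) : Prop :=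
  Relation.ReflTransGen (FStep f) a b

/-- The productivity π_F of a forest: product of the weights of its arcs. -/
def forestProd {V K : Type*} [Fintype V] [CommRing K] (w : V → V → K)
    (f : V → Option V) : K :=
  ∏ v, (match f v with | some u => w v u | none => 1)

/-- Arc weights of the augmented digraph G† on vertex set `Option (Fin N)`,
where `none` plays the role of the extra vertex †: arcs (i,j), i ≠ j, have
weight g_ij, arcs (i,†) have weight -Σ_j g_ij; there are no loops and no
arcs out of †. -/
def daggerWeight {N : ℕ} {K : Type*} [CommRing K] (G : Matrix (Fin N) (Fin N) K) :
    Option (Fin N) → Option (Fin N) → K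
  | some i, some j => if i = j then 0 else G i j
  | some i, none => -(∑ j, G i j)
  | none, _ => 0

open Relation Matrix

lemma Equiv.Perm.transGen_self_of_forall_ne {α : Type*} [Fintype α] {r : α → α → Prop}
    (σ : Equiv.Perm α) (h : ∀ x, σ x ≠ x → r x (σ x)) {a : α} (ha : σ a ≠ a) :
    TransGen r a a := by
  have hmoved : ∀ n : ℕ, σ ((σ ^ n) a) ≠ (σ ^ n) a := fun n hn =>
    ha <| (σ ^ n).injective <| by
      rw [← Equiv.Perm.mul_apply, ← pow_succ, pow_succ', Equiv.Perm.mul_apply, hn]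
  have hpath : ∀ n : ℕ, TransGen r a ((σ ^ (n + 1)) a) := by
    intro n
    induction n with
    | zero => simpa using TransGen.single (h a ha)
    | succ n ih =>
      refine ih.tail ?_
      rw [pow_succ' σ (n + 1), Equiv.Perm.mul_apply]
      exact h _ (hmoved _)
  simpa [Nat.sub_add_cancel (orderOf_pos σ), pow_orderOf_eq_one] using hpath (orderOf σ - 1)

section Forest

variable {V : Type*}

lemma FStep.unique {f : V → Option V} {a b c : V} (hb : FStep f a b) (hc : FStep f a c) : b = c :=
  Option.some_injective _ (hb.symm.trans hc)

lemma mem_roots [Fintype V] {f : V → Option V} {v : V} : v ∈ roots f ↔ f v = none := by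
  simp [roots]

lemma IsForest.apply_ne_self {f : V → Option V} (hf : IsForest f) (v : V) : f v ≠ some v :=
  fun h => hf v (.single h)

def AvoidsRoots (f : V → Option V) (a : V) : Prop := ∀ b, Reach f a b → f b ≠ none

lemma not_avoidsRoots_of_apply_eq_none {f : V → Option V} {a : V} (h : f a = none) :
    ¬ AvoidsRoots f a :=
  fun ha => ha a ReflTransGen.refl h

lemma avoidsRoots_iff_of_apply_eq_some {f : V → Option V} {a t : V} (h : f a = some t) :
    AvoidsRoots f a ↔ AvoidsRoots f t := by
  refine ⟨fun ha b htb => ha b (ReflTransGen.head h htb), fun ht b hab => ?_⟩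
  rcases ReflTransGen.cases_head_iff.mp hab with rfl | ⟨c, hac, hcb⟩
  · simp [h]
  · exact ht b (FStep.unique h hac ▸ hcb)

lemma avoidsRoots_of_transGen_self {f : V → Option V} {a : V} (ha : TransGen (FStep f) a a) :
    AvoidsRoots f a := by
  suffices ∀ b, Reach f a b → TransGen (FStep f) b a by
    intro b hab hb
    obtain ⟨c, hbc, -⟩ := TransGen.head'_iff.mp (this b hab)
    simp [FStep, hb] at hbc
  intro b hab
  induction hab with
  | refl => exact ha
  | tail _ hcb ih =>
    obtain ⟨d, hcd, hda⟩ := TransGen.head'_iff.mp ih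
    exact TransGen.trans_right (FStep.unique hcd hcb ▸ hda) ha

variable (K : Type*) [CommRing K] in
def arcMatrix (f : V → Option V) : Matrix V V K :=
  Matrix.of fun u v => if f u = some v then 1 else 0

variable {K : Type*} [CommRing K] [Fintype V] [DecidableEq V] (S : Finset V)

lemma det_one_sub_arcMatrix_submatrix_of_isForest {f : V → Option V} (hf : IsForest f) :
    ((1 - arcMatrix K f).submatrix ((↑) : {v // v ∉ S} → V) (↑)).det = 1 := by
  rw [← det_transpose, det_apply', Finset.sum_eq_single 1]
  · simp [arcMatrix, hf.apply_ne_self]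
  · intro σ _ hσ
    obtain ⟨a, ha⟩ : ∃ a, σ a ≠ a := by
      by_contra! h
      exact hσ (Equiv.ext h)
    suffices ∃ u, σ u ≠ u ∧ f u.1 ≠ some (σ u).1 by
      obtain ⟨u, hu, hfu⟩ := this
      refine mul_eq_zero_of_right _ (Finset.prod_eq_zero (Finset.mem_univ u) ?_)
      simp [arcMatrix, hfu, one_apply_ne (Subtype.val_injective.ne hu.symm)]
    by_contra! h
    exact hf a (TransGen.lift Subtype.val (fun _ _ h => h) _ _
      (σ.transGen_self_of_forall_ne (r := fun x y : {v // v ∉ S} => FStep f x y) h ha))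
  · simp

lemma det_one_sub_arcMatrix_submatrix_of_not_isForest {f : V → Option V}
    (hS : ∀ s ∈ S, f s = none) (hf : ¬ IsForest f) :
    ((1 - arcMatrix K f).submatrix ((↑) : {v // v ∉ S} → V) (↑)).det = 0 := by
  obtain ⟨a, ha⟩ : ∃ a, TransGen (FStep f) a a := by simpa [IsForest] using hf
  have haS : a ∉ S := fun h => by
    obtain ⟨b, hab, -⟩ := TransGen.head'_iff.mp ha
    simp [FStep, hS a h] at hab
  let y : {v // v ∉ S} → K := fun u => if AvoidsRoots f u then 1 else 0
  refine det_eq_zero_of_mulVec_eq_zero_of_mem_nonZeroDivisors (v := y) (i := ⟨a, haS⟩) ?_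
    (by simp [y, avoidsRoots_of_transGen_self ha])
  ext u
  simp only [mulVec, dotProduct, submatrix_apply, Matrix.sub_apply, sub_mul, Finset.sum_sub_distrib,
    one_apply, Subtype.val_inj, ite_mul, one_mul, zero_mul, Finset.sum_ite_eq, Finset.mem_univ,
    if_true, arcMatrix, of_apply, Pi.zero_apply, sub_eq_zero]
  rcases hfu : f u with _ | t
  · simp [y, not_avoidsRoots_of_apply_eq_none hfu]
  have hyu : y u = if AvoidsRoots f t then 1 else 0 := by
    simp [y, avoidsRoots_iff_of_apply_eq_some hfu]
  by_cases htS : t ∈ S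
  · simp only [hyu, not_avoidsRoots_of_apply_eq_none (hS t htS), if_false, Option.some_inj]
    exact (Finset.sum_eq_zero fun x _ => if_neg fun hx => x.2 (hx ▸ htS)).symm
  · rw [Fintype.sum_eq_single ⟨t, htS⟩ fun x hx =>
      if_neg fun h => hx (Subtype.ext (Option.some_injective _ h.symm))]
    simp [hyu, y]

lemma det_one_sub_arcMatrix_submatrix {f : V → Option V} (hS : ∀ s ∈ S, f s = none) :
    ((1 - arcMatrix K f).submatrix ((↑) : {v // v ∉ S} → V) (↑)).det =
      if IsForest f then 1 else 0 := by
  split_ifs with hf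
  · exact det_one_sub_arcMatrix_submatrix_of_isForest S hf
  · exact det_one_sub_arcMatrix_submatrix_of_not_isForest S hS hf

end Forest

section Laplacian

variable {V : Type*} [Fintype V] [DecidableEq V] {K : Type*} [CommRing K]

-- loops `w u u` cancel on the diagonal
def laplacian (w : V → V → K) : Matrix V V K :=
  diagonal (fun u => ∑ t, w u t) - of w

def withRoots (S : Finset V) (g : {v // v ∉ S} → V) (v : V) : Option V :=
  if h : v ∈ S then none else some (g ⟨v, h⟩)

variable (S : Finset V)

omit [Fintype V] in
lemma withRoots_of_mem (g : {v // v ∉ S} → V) {s : V} (hs : s ∈ S) : withRoots S g s = none := by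
  simp [withRoots, hs]

omit [Fintype V] in
lemma withRoots_of_notMem (g : {v // v ∉ S} → V) (u : {v // v ∉ S}) :
    withRoots S g u = some (g u) := by
  simp [withRoots, u.2]

lemma roots_withRoots (g : {v // v ∉ S} → V) : roots (withRoots S g) = S := by
  ext v
  by_cases hv : v ∈ S <;> simp [mem_roots, withRoots, hv]

lemma forestProd_withRoots (w : V → V → K) (g : {v // v ∉ S} → V) :
    forestProd w (withRoots S g) = ∏ u : {v // v ∉ S}, w u (g u) := by
  rw [forestProd, ← Fintype.prod_subtype_mul_prod_subtype (· ∈ S), Finset.prod_eq_one, one_mul]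
  · exact Finset.prod_congr rfl fun u _ => by simp [withRoots_of_notMem]
  · intro s _
    simp [withRoots_of_mem S g s.2]

lemma withRoots_getD {f : V → Option V} (hf : roots f = S) :
    withRoots S (fun u => (f u).getD u) = f := by
  funext v
  have hv : v ∈ S ↔ f v = none := hf ▸ mem_roots
  by_cases hvS : v ∈ S
  · simp [withRoots, hvS, hv.mp hvS]
  · obtain ⟨t, ht⟩ := Option.ne_none_iff_exists'.mp (mt hv.mpr hvS)
    simp [withRoots, hvS, ht]

lemma det_laplacian_submatrix_eq_sum (w : V → V → K) :
    ((laplacian w).submatrix ((↑) : {v // v ∉ S} → V) (↑)).det =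
      ∑ g : {v // v ∉ S} → V, (∏ u : {v // v ∉ S}, w u (g u)) *
        ((1 - arcMatrix K (withRoots S g)).submatrix ((↑) : {v // v ∉ S} → V) (↑)).det := by
  have hrows : (laplacian w).submatrix ((↑) : {v // v ∉ S} → V) (↑) = fun u : {v // v ∉ S} =>
      ∑ t, w u t • fun v : {v // v ∉ S} => (if u = v then 1 else 0) - if t = v then 1 else 0 := by
    ext u v
    simp [laplacian, diagonal_apply, Subtype.val_inj, mul_sub, Finset.sum_sub_distrib]
  rw [det, hrows]
  refine (detRowAlternating.toMultilinearMap.map_sum _).trans (Finset.sum_congr rfl fun g _ => ?_)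
  rw [AlternatingMap.coe_multilinearMap, AlternatingMap.map_smul_univ, smul_eq_mul, det]
  congr 2
  ext u v
  simp [arcMatrix, withRoots_of_notMem, one_apply, Subtype.val_inj]

theorem det_laplacian_submatrix_eq_sum_forests (w : V → V → K) :
    ((laplacian w).submatrix ((↑) : {v // v ∉ S} → V) (↑)).det =
      ∑ᶠ f ∈ {f | IsForest f ∧ roots f = S}, forestProd w f := by
  have hforests : {f | IsForest f ∧ roots f = S} =
      ↑({f | IsForest f ∧ roots f = S} : Finset (V → Option V)) := by
    ext f
    simp
  have hdet (g : {v // v ∉ S} → V) := det_one_sub_arcMatrix_submatrix (K := K) S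
    fun _ hs => withRoots_of_mem S g hs
  rw [hforests, finsum_mem_coe_finset, det_laplacian_submatrix_eq_sum]
  simp only [hdet, mul_ite, mul_one, mul_zero, ← Finset.sum_filter]
  refine Finset.sum_nbij' (withRoots S) (fun f u => (f u).getD u) ?_ ?_ ?_ ?_ ?_
  · intro g hg
    simpa [roots_withRoots] using hg
  · intro f hf
    simp only [Finset.mem_filter, Finset.mem_univ, true_and] at hf ⊢
    exact (withRoots_getD S hf.2).symm ▸ hf.1
  · intro g _
    funext u
    simp [withRoots_of_notMem]
  · intro f hf
    exact withRoots_getD S (Finset.mem_filter.mp hf).2.2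
  · intro g _
    exact (forestProd_withRoots S w g).symm

end Laplacian

section Dagger

variable {N : ℕ} {K : Type*} [CommRing K]

lemma laplacian_daggerWeight (G : Matrix (Fin N) (Fin N) K) (i j : Fin N) :
    laplacian (daggerWeight G) (some i) (some j) = -G i j := by
  by_cases hij : i = j
  · subst hij
    have hsplit := Finset.sum_filter_add_sum_filter_not univ (fun j => i = j) (G i)
    simp only [Finset.filter_eq, Finset.mem_univ, if_true, Finset.sum_singleton] at hsplit
    simp [laplacian, daggerWeight, Fintype.sum_option, Finset.sum_ite, ← hsplit]
  · simp [laplacian, daggerWeight, hij]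

def someComplEquiv {α : Type*} [DecidableEq α] (R : Finset α) :
    {i // i ∉ R} ≃ {v : Option α // v ∉ insert none (R.image some)} where
  toFun i := ⟨some i, by simp [i.2]⟩
  invFun v := ⟨v.1.get (Option.ne_none_iff_isSome.mp fun h => v.2 (by simp [h])),
    fun h => v.2 (Finset.mem_insert_of_mem (by simpa using Finset.mem_image_of_mem some h))⟩
  left_inv i := rfl
  right_inv v := by simp

lemma det_laplacian_daggerWeight_submatrix (G : Matrix (Fin N) (Fin N) K) (R : Finset (Fin N)) :
    ((laplacian (daggerWeight G)).submatrix
      ((↑) : {v // v ∉ insert none (R.image some)} → Option (Fin N)) (↑)).det =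
      (-1) ^ (N - R.card) * (G.submatrix ((↑) : {i // i ∉ R} → Fin N) (↑)).det := by
  have hG : ((laplacian (daggerWeight G)).submatrix (↑) (↑)).submatrix
      (someComplEquiv R) (someComplEquiv R) = -G.submatrix (↑) (↑) := by
    ext i j
    exact laplacian_daggerWeight G i j
  rw [← det_submatrix_equiv_self (someComplEquiv R), hG, det_neg]
  simp

end Dagger

/-- Determinant of a principal submatrix G_RR expressed through spanning forests
of G† whose root set is exactly {†} ∪ R. -/
theorem stmt4 {N : ℕ} (G : Matrix (Fin N) (Fin N) ℂ) (R : Finset (Fin N)) :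
    (G.submatrix (fun i : {i : Fin N // i ∉ R} => (i : Fin N))
        (fun j : {i : Fin N // i ∉ R} => (j : Fin N))).det =
      (-1 : ℂ) ^ (N - R.card) *
        ∑ᶠ f ∈ {f : Option (Fin N) → Option (Option (Fin N)) |
            IsForest f ∧ f none = none ∧ roots f = insert none (R.image some)},
          forestProd (daggerWeight G) f := by
  have hforests : {f : Option (Fin N) → Option (Option (Fin N)) |
      IsForest f ∧ f none = none ∧ roots f = insert none (R.image some)} =
      {f | IsForest f ∧ roots f = insert none (R.image some)} := by
    ext f
    refine ⟨fun h => ⟨h.1, h.2.2⟩, fun h => ⟨h.1, ?_, h.2⟩⟩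
    exact mem_roots.mp (h.2 ▸ Finset.mem_insert_self _ _)
  rw [hforests, ← det_laplacian_submatrix_eq_sum_forests, det_laplacian_daggerWeight_submatrix,
    ← mul_assoc, ← mul_pow]
  simp
end
end

section
/- Let F be a spanning forest of G† with exactly three trees T_†, T_n, T_m rooted at †, n, m respectively. Adding to F an arc (m,i) (i ≠ m) yields: a spanning forest with two trees rooted at † and n if i ∈ V(T_†) ∪ V(T_n); and a functional graph containing exactly one directed circuit, that circuit passing through m, with all vertices except † and n having out-degree 1, if i ∈ V(T_m). -/
open scoped Classical
open Finset

noncomputable section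

/-!
Every vertex has at most one out-arc, so the walks out of a vertex form a single path; in
particular a root of `f` is the end of any path that reaches it. Redirecting the root `m` to
`i` only changes the arc out of `m`, hence a circuit of the new graph avoiding `m` would be a
circuit of the forest `f`. So the new graph has a circuit iff it has one through `m`, i.e. iff
the `f`-path from `i` reaches `m`; and that path can reach at most one of the roots `†`, `n`, `m`.
-/

section Functional

variable {V : Type*} {f : V → Option V}

lemma FStep.right_unique {a b c : V} (hb : FStep f a b) (hc : FStep f a c) : b = c :=
  Option.some_injective _ (hb.symm.trans hc)

lemma Reach.total_of_common_source {a b c : V} (hb : Reach f a b) (hc : Reach f a c) :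
    Reach f b c ∨ Reach f c b := by
  induction hc with
  | refl => exact Or.inr hb
  | tail _ hstep ih =>
    rcases ih with h | h
    · exact Or.inl (h.tail hstep)
    · rcases Relation.ReflTransGen.cases_head h with rfl | ⟨u, hu, hub⟩
      · exact Or.inl (.single hstep)
      · cases hstep.right_unique hu
        exact Or.inr hub

lemma Reach.eq_of_eq_none {a b : V} (ha : f a = none) (h : Reach f a b) : b = a := by
  rcases Relation.ReflTransGen.cases_head h with rfl | ⟨u, hu, _⟩
  · rfl
  · simp [FStep, ha] at hu

lemma not_reach_of_reach_of_eq_none {a b c : V} (ha : f a = none) (hb : f b = none)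
    (hab : a ≠ b) (hca : Reach f c a) : ¬ Reach f c b := fun hcb => by
  rcases hca.total_of_common_source hcb with h | h
  · exact hab (h.eq_of_eq_none ha).symm
  · exact hab (h.eq_of_eq_none hb)

lemma Reach.reach_of_transGen_self {v w : V} (hc : Relation.TransGen (FStep f) v v)
    (hr : Reach f v w) : Reach f w v := by
  induction hr with
  | refl => exact .refl
  | tail _ hstep ih =>
    rcases Relation.ReflTransGen.cases_head ih with rfl | ⟨u, hu, hub⟩
    · obtain ⟨u, hu, huv⟩ := Relation.TransGen.head'_iff.mp hc
      cases hstep.right_unique hu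
      exact huv
    · cases hstep.right_unique hu
      exact hub

end Functional

section Update

variable {V : Type*} [DecidableEq V] {f : V → Option V} {r i : V}

lemma update_some_eq_none_iff (v : V) :
    Function.update f r (some i) v = none ↔ v ≠ r ∧ f v = none := by
  by_cases hv : v = r <;> simp [hv]

lemma fstep_update_iff_of_ne {a b : V} (ha : a ≠ r) :
    FStep (Function.update f r (some i)) a b ↔ FStep f a b := by
  simp only [FStep, Function.update_of_ne ha]

lemma Reach.update_of_eq_none (hr : f r = none) {a b : V} (h : Reach f a b) :
    Reach (Function.update f r (some i)) a b :=
  Relation.ReflTransGen.mono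
    (fun _ _ hxy => (fstep_update_iff_of_ne (by rintro rfl; simp [FStep, hr] at hxy)).2 hxy) a b h

lemma reach_of_reach_update {a : V} (h : Reach (Function.update f r (some i)) a r) :
    Reach f a r := by
  induction h using Relation.ReflTransGen.head_induction_on with
  | refl => exact .refl
  | @head x c hxc _ ih =>
    by_cases hx : x = r
    · exact hx ▸ .refl
    · exact .head ((fstep_update_iff_of_ne hx).1 hxc) ih

lemma transGen_of_transGen_update {a b : V}
    (h : Relation.TransGen (FStep (Function.update f r (some i))) a b)
    (har : ¬ Reach (Function.update f r (some i)) a r) : Relation.TransGen (FStep f) a b := by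
  induction h using Relation.TransGen.head_induction_on with
  | @single x hxb =>
    have hx : x ≠ r := by rintro rfl; exact har .refl
    exact .single ((fstep_update_iff_of_ne hx).1 hxb)
  | @head x c hxc _ ih =>
    have hx : x ≠ r := by rintro rfl; exact har .refl
    exact .head ((fstep_update_iff_of_ne hx).1 hxc) (ih fun hcr => har (.head hxc hcr))

lemma transGen_update_self_iff (hr : f r = none) :
    Relation.TransGen (FStep (Function.update f r (some i))) r r ↔ Reach f i r := by
  have hstep : FStep (Function.update f r (some i)) r i := by simp [FStep]
  constructor
  · intro h
    obtain ⟨u, hu, hur⟩ := Relation.TransGen.head'_iff.mp h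
    cases hstep.right_unique hu
    exact reach_of_reach_update hur
  · exact fun h => .head' hstep (h.update_of_eq_none hr)

/-- A circuit avoiding `r` would consist of arcs of `f`. -/
lemma IsForest.transGen_update_of_transGen_self (hf : IsForest f) {v : V}
    (hv : Relation.TransGen (FStep (Function.update f r (some i))) v v) :
    Relation.TransGen (FStep (Function.update f r (some i))) v r := by
  by_contra hvr
  refine hf v (transGen_of_transGen_update hv fun h => ?_)
  rcases Relation.ReflTransGen.cases_head h with rfl | ⟨u, hu, hur⟩
  · exact hvr hv
  · exact hvr (.head' hu hur)

lemma IsForest.update_of_not_reach (hf : IsForest f) (hr : f r = none) (hi : ¬ Reach f i r) :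
    IsForest (Function.update f r (some i)) := fun v hv => by
  have hvr := hf.transGen_update_of_transGen_self hv
  exact hi <| (transGen_update_self_iff hr).1 <|
    .trans_right (Reach.reach_of_transGen_self hv hvr.to_reflTransGen) hvr

end Update

theorem stmt13_general {N : ℕ} (n m : Fin N) (hnm : n ≠ m)
    (f : Option (Fin N) → Option (Option (Fin N)))
    (hf : IsForest f ∧ f none = none ∧ roots f = {none, some n, some m})
    (i : Option (Fin N)) :
    ((Reach f i none ∨ Reach f i (some n)) →
        IsForest (Function.update f (some m) (some i)) ∧
          roots (Function.update f (some m) (some i)) = {none, some n}) ∧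
    (Reach f i (some m) →
        (∀ v, Function.update f (some m) (some i) v = none ↔
            (v = none ∨ v = some n)) ∧
        Relation.TransGen (FStep (Function.update f (some m) (some i)))
          (some m) (some m) ∧
        ∀ v, Relation.TransGen (FStep (Function.update f (some m) (some i))) v v →
          Relation.TransGen (FStep (Function.update f (some m) (some i)))
            v (some m)) := by
  obtain ⟨hforest, hnone, hroots⟩ := hf
  have hroot (v) : f v = none ↔ v = none ∨ v = some n ∨ v = some m := by
    simpa [roots] using Finset.ext_iff.mp hroots v
  have hm : f (some m) = none := (hroot _).2 (by simp)
  have hupdate (v) : Function.update f (some m) (some i) v = none ↔ v = none ∨ v = some n := by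
    rw [update_some_eq_none_iff, hroot]
    rcases v with _ | v <;> simp only [reduceCtorEq, Option.some.injEq] <;> grind
  refine ⟨fun hreach => ⟨hforest.update_of_not_reach hm ?_, ?_⟩,
    fun hreach => ⟨hupdate, (transGen_update_self_iff hm).2 hreach,
      fun _ => hforest.transGen_update_of_transGen_self⟩⟩
  · rcases hreach with h | h
    · exact not_reach_of_reach_of_eq_none hnone hm (by simp) h
    · exact not_reach_of_reach_of_eq_none ((hroot _).2 (by simp)) hm (by simpa using hnm) h
  · ext v
    simpa [roots] using hupdate v

/-- Adding to a three-tree spanning forest F (with trees rooted at †, n, m) an arc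
(m,i): if i lies in the tree of † or of n, one gets a two-tree spanning forest
rooted at † and n; if i lies in the tree of m, one gets a graph in which exactly
† and n have out-degree 0 and which contains exactly one directed circuit, that
circuit passing through m. -/
theorem stmt13 {N : ℕ} (n m : Fin N) (hnm : n ≠ m)
    (f : Option (Fin N) → Option (Option (Fin N)))
    (hf : IsForest f ∧ f none = none ∧ roots f = {none, some n, some m})
    (i : Option (Fin N)) (hi : i ≠ some m) :
    ((Reach f i none ∨ Reach f i (some n)) →
        IsForest (Function.update f (some m) (some i)) ∧
          roots (Function.update f (some m) (some i)) = {none, some n}) ∧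
    (Reach f i (some m) →
        (∀ v, Function.update f (some m) (some i) v = none ↔
            (v = none ∨ v = some n)) ∧
        Relation.TransGen (FStep (Function.update f (some m) (some i)))
          (some m) (some m) ∧
        ∀ v, Relation.TransGen (FStep (Function.update f (some m) (some i))) v v →
          Relation.TransGen (FStep (Function.update f (some m) (some i)))
            v (some m)) :=
  stmt13_general n m hnm f hf i
end
end
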